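/- arXiv:math/0304499 — 4 statements merged into one kernel-verified Lean document; each statement's English description precedes it below -/
import Mathlib

section
/- If a sequence of characteristic functions g_n, each of which is φ-infinitely divisible, converges pointwise to a characteristic function f, then f is φ-infinitely divisible. -/
open MeasureTheory Filter Topology

/-- `φ` is the Laplace transform of (the distribution of) a nonnegative random variable. -/
def IsLTR (φ : ℝ → ℝ) : Prop :=
  ∃ μ : Measure ℝ, IsProbabilityMeasure μ ∧ μ {x | x < 0} = 0 ∧
    ∀ s : ℝ, 0 ≤ s → φ s = ∫ x, Real.exp (-s * x) ∂μ

/-- `P` is the probability generating function of a nonnegative-integer-valued random variable. -/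
def IsPGF (P : ℝ → ℝ) : Prop :=
  ∃ p : ℕ → ℝ, (∀ n, 0 ≤ p n) ∧ (∑' n, p n) = 1 ∧
    ∀ s : ℝ, 0 ≤ s → s ≤ 1 → P s = ∑' n, p n * s ^ n

/-- `f` is the characteristic function of a probability distribution on `ℝ`. -/
def IsCF (f : ℝ → ℂ) : Prop :=
  ∃ μ : Measure ℝ, IsProbabilityMeasure μ ∧
    ∀ t : ℝ, f t = ∫ x, Complex.exp (Complex.I * (t * x)) ∂μ

/-- `φ` (as a function on the right complex half-plane) is the Laplace transform of a
nonnegative random variable. -/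
def IsLT (φ : ℂ → ℂ) : Prop :=
  ∃ μ : Measure ℝ, IsProbabilityMeasure μ ∧ μ {x | x < 0} = 0 ∧
    ∀ z : ℂ, 0 ≤ z.re → φ z = ∫ x, Complex.exp (-z * x) ∂μ

/-- `ω` is an infinitely divisible characteristic function. -/
def IsID (ω : ℝ → ℂ) : Prop :=
  IsCF ω ∧ ∀ n : ℕ, 0 < n → ∃ g : ℝ → ℂ, IsCF g ∧ ∀ t, ω t = g t ^ n

/-- `f` is φ-infinitely divisible: it is a pointwise limit of `φ (aₙ (1 - fₙ(t)))` for
positive constants `aₙ` and characteristic functions `fₙ`. -/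
def PhiID (φ : ℂ → ℂ) (f : ℝ → ℂ) : Prop :=
  ∃ a : ℕ → ℝ, (∀ n, 0 < a n) ∧ ∃ fn : ℕ → ℝ → ℂ, (∀ n, IsCF (fn n)) ∧
    ∀ t, Tendsto (fun n => φ ((a n : ℂ) * (1 - fn n t))) atTop (𝓝 (f t))

/-- `ω` is a stable characteristic function. -/
def IsStable (ω : ℝ → ℂ) : Prop :=
  IsCF ω ∧ ∀ n : ℕ, 0 < n → ∃ a : ℝ, 0 < a ∧ ∃ b : ℝ,
    ∀ t, ω t ^ n = ω (a * t) * Complex.exp (Complex.I * (b * t))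


/-!
Each approximant `t ↦ φ (a * (1 - w t))` is itself a characteristic function: if `φ` is the
Laplace transform of `X ≥ 0` and `w` the characteristic function of `ν`, it is the
characteristic function of `Y₁ + ⋯ + Y_N`, with `Yᵢ ∼ ν` i.i.d. and `N` Poisson with the random
rate `a X`. By Lévy's continuity theorem, pointwise convergence of characteristic functions to a
characteristic function is convergence of the laws in the metrizable topology of weak
convergence, so a diagonal sequence of approximants of the `gₙ` converges to `f`.
-/

open scoped ENNReal NNReal
open ProbabilityTheory

theorem exists_tendsto_diagonal {X : Type*} [TopologicalSpace X]
    [TopologicalSpace.PseudoMetrizableSpace X] {x : ℕ → ℕ → X} {y : ℕ → X} {z : X}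
    (hx : ∀ n, Tendsto (x n) atTop (𝓝 (y n))) (hy : Tendsto y atTop (𝓝 z)) :
    ∃ K : ℕ → ℕ, Tendsto (fun n => x n (K n)) atTop (𝓝 z) := by
  let := TopologicalSpace.pseudoMetrizableSpacePseudoMetric X
  have hclose : ∀ n : ℕ, ∃ k, dist (x n k) (y n) < 1 / (n + 1) := fun n =>
    ((hx n).eventually (Metric.ball_mem_nhds _ Nat.one_div_pos_of_nat)).exists
  choose K hK using hclose
  refine ⟨K, tendsto_iff_dist_tendsto_zero.2 <|
    squeeze_zero (g := fun n => 1 / (n + 1) + dist (y n) z) (fun _ => dist_nonneg)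
      (fun n => (dist_triangle _ (y n) z).trans (add_le_add (hK n).le le_rfl)) ?_⟩
  simpa using tendsto_one_div_add_atTop_nhds_zero_nat.add (tendsto_iff_dist_tendsto_zero.1 hy)

section Compound

variable {E : Type*} [AddMonoid E] [MeasurableSpace E]

noncomputable def convPow (ν : Measure E) : ℕ → Measure E
  | 0 => Measure.dirac 0
  | m + 1 => ν ∗ convPow ν m

instance isProbabilityMeasure_convPow [MeasurableAdd₂ E] (ν : Measure E)
    [IsProbabilityMeasure ν] (m : ℕ) : IsProbabilityMeasure (convPow ν m) := by
  induction m with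
  | zero => rw [convPow]; infer_instance
  | succ m ih => rw [convPow]; infer_instance

/-- The law of `X₁ + ⋯ + X_N` for i.i.d. `Xᵢ ∼ ν` and an independent `N` with `P(N = m) = c m`. -/
noncomputable def compound (c : ℕ → ℝ≥0∞) (ν : Measure E) : Measure E :=
  Measure.sum fun m => c m • convPow ν m

theorem isProbabilityMeasure_compound [MeasurableAdd₂ E] {c : ℕ → ℝ≥0∞}
    (hc : ∑' m, c m = 1) (ν : Measure E) [IsProbabilityMeasure ν] :
    IsProbabilityMeasure (compound c ν) :=
  ⟨by simp [compound, Measure.sum_apply _ MeasurableSet.univ, hc]⟩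

end Compound

section CharFun

variable {E : Type*} [NormedAddCommGroup E] [InnerProductSpace ℝ E] [MeasurableSpace E]
  [BorelSpace E] [SecondCountableTopology E] (ν : Measure E) [IsProbabilityMeasure ν]

theorem charFun_convPow (t : E) (m : ℕ) : charFun (convPow ν m) t = charFun ν t ^ m := by
  induction m with
  | zero => simp [convPow]
  | succ m ih => rw [convPow, charFun_conv, ih, pow_succ']

theorem charFun_compound {c : ℕ → ℝ≥0∞} (hc : ∑' m, c m = 1) (t : E) :
    charFun (compound c ν) t = ∑' m, (c m).toReal * charFun ν t ^ m := by
  have := isProbabilityMeasure_compound hc ν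
  have hint : Integrable (fun x => Complex.exp (inner ℝ x t * Complex.I)) (compound c ν) :=
    .of_bound (by fun_prop) 1 (.of_forall fun x => (Complex.norm_exp_ofReal_mul_I _).le)
  rw [charFun_apply, compound, integral_sum_measure hint]
  congr with m
  rw [integral_smul_measure, ← charFun_apply, charFun_convPow, Complex.real_smul]

end CharFun

theorem hasSum_poissonMeasure_real_mul_pow (r : ℝ≥0) (w : ℂ) :
    HasSum (fun m => ((poissonMeasure r).real {m} : ℂ) * w ^ m)
      (Complex.exp (-(r * (1 - w)))) := by
  have h := (NormedSpace.expSeries_div_hasSum_exp ((r : ℂ) * w)).mul_left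
    (Complex.exp (-(r : ℂ)))
  rw [← Complex.exp_eq_exp_ℂ, ← Complex.exp_add] at h
  have hterm : (fun m => ((poissonMeasure r).real {m} : ℂ) * w ^ m) =
      fun m => Complex.exp (-(r : ℂ)) * (((r : ℂ) * w) ^ m / m.factorial) := by
    ext m
    rw [poissonMeasure_real_singleton]
    push_cast
    ring
  rwa [hterm, show -((r : ℂ) * (1 - w)) = -r + r * w by ring]

noncomputable def mixedPoissonWeight (μ : Measure ℝ) (a : ℝ) (m : ℕ) : ℝ≥0∞ :=
  ∫⁻ x, poissonMeasure (a * x).toNNReal {m} ∂μ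

theorem tsum_mixedPoissonWeight (μ : Measure ℝ) [IsProbabilityMeasure μ] (a : ℝ) :
    ∑' m, mixedPoissonWeight μ a m = 1 := by
  have hmeas : ∀ m, AEMeasurable (fun x : ℝ => poissonMeasure (a * x).toNNReal {m}) μ := by
    intro m
    simp only [poissonMeasure_singleton]
    fun_prop
  have hone : ∀ r : ℝ≥0, ∑' m, poissonMeasure r {m} = 1 := fun r => by
    have h := hasSum_one_poissonMeasure r
    simp only [poissonMeasure_singleton]
    rw [← ENNReal.ofReal_tsum_of_nonneg (fun _ => by positivity) h.summable, h.tsum_eq,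
      ENNReal.ofReal_one]
  simp only [mixedPoissonWeight]
  rw [← lintegral_tsum hmeas]
  simp [hone]

theorem integral_cexp_neg_mul_one_sub {μ : Measure ℝ} [IsProbabilityMeasure μ]
    (hμ : ∀ᵐ x ∂μ, 0 ≤ x) {a : ℝ} (ha : 0 ≤ a) {w : ℂ} (hw : ‖w‖ ≤ 1) :
    ∫ x, Complex.exp (-(a * (1 - w)) * x) ∂μ =
      ∑' m, (mixedPoissonWeight μ a m).toReal * w ^ m := by
  set p : ℕ → ℝ → ℝ := fun m x => (poissonMeasure (a * x).toNNReal).real {m}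
  have hp_meas : ∀ m, Measurable (p m) := by
    intro m
    simp only [p, poissonMeasure_real_singleton]
    fun_prop
  have hp_integrable : ∀ m, Integrable (p m) μ := fun m =>
    .of_bound (hp_meas m).aestronglyMeasurable 1 (.of_forall fun _ =>
      (Real.norm_of_nonneg measureReal_nonneg).trans_le measureReal_le_one)
  have hp_integral : ∀ m, ∫ x, p m x ∂μ = (mixedPoissonWeight μ a m).toReal := fun m =>
    integral_toReal (by simp only [poissonMeasure_singleton]; fun_prop)
      (.of_forall fun _ => measure_lt_top _ _)
  have hterm_le : ∀ m x, ‖(p m x : ℂ) * w ^ m‖ ≤ p m x := fun m x => by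
    rw [norm_mul, Complex.norm_real, Real.norm_of_nonneg measureReal_nonneg, norm_pow]
    exact mul_le_of_le_one_right measureReal_nonneg (pow_le_one₀ (norm_nonneg w) hw)
  have hterm_integrable : ∀ m, Integrable (fun x => (p m x : ℂ) * w ^ m) μ := fun m =>
    (hp_integrable m).ofReal.mul_const _
  have hsummable : Summable fun m => ∫ x, ‖(p m x : ℂ) * w ^ m‖ ∂μ := by
    have hweights := ENNReal.summable_toReal (tsum_mixedPoissonWeight μ a ▸ ENNReal.one_ne_top)
    refine hweights.of_nonneg_of_le
      (fun m => integral_nonneg fun _ => norm_nonneg _) fun m => ?_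
    rw [← hp_integral]
    exact integral_mono (hterm_integrable m).norm (hp_integrable m) (hterm_le m)
  have hexpand : ∀ᵐ x : ℝ ∂μ,
      Complex.exp (-(a * (1 - w)) * x) = ∑' m, (p m x : ℂ) * w ^ m := by
    filter_upwards [hμ] with x hx
    rw [(hasSum_poissonMeasure_real_mul_pow _ w).tsum_eq, Real.coe_toNNReal _ (mul_nonneg ha hx)]
    push_cast
    ring_nf
  rw [integral_congr_ae hexpand,
    ← integral_tsum_of_summable_integral_norm hterm_integrable hsummable]
  congr with m
  rw [integral_mul_const, integral_complex_ofReal, hp_integral]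

theorem isCF_iff_exists_charFun {f : ℝ → ℂ} :
    IsCF f ↔ ∃ μ : ProbabilityMeasure ℝ, f = charFun (μ : Measure ℝ) := by
  have hkernel : ∀ t x : ℝ,
      Complex.exp (Complex.I * (t * x)) = Complex.exp (t * x * Complex.I) :=
    fun t x => by rw [mul_comm]
  simp only [IsCF, funext_iff, charFun_apply_real, hkernel]
  exact ⟨fun ⟨μ, hμ, h⟩ => ⟨⟨μ, hμ⟩, h⟩, fun ⟨μ, h⟩ => ⟨μ, μ.2, h⟩⟩

theorem IsLT.isCF_comp_mul_one_sub {φ : ℂ → ℂ} (hφ : IsLT φ) {a : ℝ} (ha : 0 ≤ a)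
    {w : ℝ → ℂ} (hw : IsCF w) : IsCF fun t => φ (a * (1 - w t)) := by
  obtain ⟨μ, hμ, hneg, hφμ⟩ := hφ
  obtain ⟨ν, rfl⟩ := isCF_iff_exists_charFun.1 hw
  have hnonneg : ∀ᵐ x ∂μ, 0 ≤ x := ae_iff.2 (by simpa only [not_le] using hneg)
  have hsum := tsum_mixedPoissonWeight μ a
  refine isCF_iff_exists_charFun.2
    ⟨⟨compound (mixedPoissonWeight μ a) ν, isProbabilityMeasure_compound hsum _⟩,
      funext fun t => ?_⟩
  have hre : 0 ≤ ((a : ℂ) * (1 - charFun (ν : Measure ℝ) t)).re := by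
    simpa [Complex.mul_re] using
      mul_nonneg ha (sub_nonneg.2 ((Complex.re_le_norm _).trans (norm_charFun_le_one t)))
  rw [hφμ _ hre, integral_cexp_neg_mul_one_sub hnonneg ha (norm_charFun_le_one t),
    ProbabilityMeasure.coe_mk, charFun_compound _ hsum]

theorem exists_tendsto_diagonal_of_isCF {h : ℕ → ℕ → ℝ → ℂ} {g : ℕ → ℝ → ℂ} {f : ℝ → ℂ}
    (hh : ∀ n k, IsCF (h n k)) (hg : ∀ n, IsCF (g n)) (hf : IsCF f)
    (hhg : ∀ n t, Tendsto (fun k => h n k t) atTop (𝓝 (g n t)))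
    (hgf : ∀ t, Tendsto (fun n => g n t) atTop (𝓝 (f t))) :
    ∃ K : ℕ → ℕ, ∀ t, Tendsto (fun n => h n (K n) t) atTop (𝓝 (f t)) := by
  choose ρ hρ using fun n k => isCF_iff_exists_charFun.1 (hh n k)
  choose ν hν using fun n => isCF_iff_exists_charFun.1 (hg n)
  obtain ⟨μ, rfl⟩ := isCF_iff_exists_charFun.1 hf
  obtain rfl : h = fun n k => charFun (ρ n k : Measure ℝ) := funext₂ hρ
  obtain rfl : g = fun n => charFun (ν n : Measure ℝ) := funext hν
  obtain ⟨K, hK⟩ := exists_tendsto_diagonal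
    (fun n => ProbabilityMeasure.tendsto_iff_tendsto_charFun.2 (hhg n))
    (ProbabilityMeasure.tendsto_iff_tendsto_charFun.2 hgf)
  exact ⟨K, ProbabilityMeasure.tendsto_iff_tendsto_charFun.1 hK⟩

theorem stmt_6 (φ : ℂ → ℂ) (hφ : IsLT φ) (g : ℕ → ℝ → ℂ) (hg : ∀ n, IsCF (g n))
    (hgID : ∀ n, PhiID φ (g n)) (f : ℝ → ℂ) (hf : IsCF f)
    (hlim : ∀ t, Tendsto (fun n => g n t) atTop (𝓝 (f t))) :
    PhiID φ f := by
  choose a ha fn hfn hconv using hgID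
  obtain ⟨K, hK⟩ := exists_tendsto_diagonal_of_isCF
    (fun n k => hφ.isCF_comp_mul_one_sub (ha n k).le (hfn n k)) hg hf hconv hlim
  exact ⟨fun n => a n (K n), fun n => ha n (K n), fun n => fn n (K n), fun n => hfn n (K n), hK⟩
end

section
/- For any Laplace transform φ, any characteristic function g, and any a > 0, the function t ↦ φ(a(1 - g(t))) is a φ-infinitely divisible characteristic function. -/
open MeasureTheory Filter Topology

/-! If `Λ ≥ 0` has Laplace transform `φ` and, given `Λ`, `N` is Poisson with mean `a Λ`, then
`P(N = n) = E[e^{-aΛ} (aΛ)^n / n!]` and, by dominated convergence in the exponential series,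
`E[w^N] = φ(a(1 - w))` for `‖w‖ ≤ 1`. Taking `w = g t`, the function `φ(a(1 - g))` is the
characteristic function of the random sum `X₁ + ⋯ + X_N` with `Xⱼ ~ ν` i.i.d., i.e. of
`∑ₙ P(N = n) ν^{*n}`, where `ν` has characteristic function `g`. It is φ-infinitely divisible
through the constant sequence `aₙ = a`, `fₙ = g`. -/

open ProbabilityTheory Complex
open scoped ENNReal

namespace MeasureTheory.Measure

section Mixture

variable {E : Type*} [MeasurableSpace E] {ι : Type*} {p : ι → ℝ≥0∞}

lemma isProbabilityMeasure_sum_smul (hp : ∑' i, p i = 1) (ν : ι → Measure E)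
    [∀ i, IsProbabilityMeasure (ν i)] : IsProbabilityMeasure (sum fun i ↦ p i • ν i) := by
  constructor
  simp [sum_apply _ MeasurableSet.univ, hp]

lemma charFun_sum_smul [Countable ι] [NormedAddCommGroup E] [InnerProductSpace ℝ E] [OpensMeasurableSpace E]
    (hp : ∑' i, p i = 1) (ν : ι → Measure E) [∀ i, IsProbabilityMeasure (ν i)] (t : E) :
    charFun (sum fun i ↦ p i • ν i) t = ∑' i, (p i).toReal * charFun (ν i) t := by
  have := isProbabilityMeasure_sum_smul hp ν
  rw [charFun_apply, integral_sum_measure]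
  · simp [integral_smul_measure, charFun_apply, Complex.real_smul]
  · exact (integrable_const (1 : ℝ)).mono (by fun_prop) (by simp [Complex.norm_exp])

end Mixture

section ConvPow

variable {E : Type*} [NormedAddCommGroup E] [InnerProductSpace ℝ E] [MeasurableSpace E]
  [BorelSpace E] [SecondCountableTopology E]

noncomputable def convPow (ν : Measure E) : ℕ → Measure E
  | 0 => dirac 0
  | n + 1 => convPow ν n ∗ ν

instance isProbabilityMeasure_convPow (ν : Measure E) [IsProbabilityMeasure ν] (n : ℕ) :
    IsProbabilityMeasure (ν.convPow n) := by
  induction n with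
  | zero => rw [convPow]; infer_instance
  | succ n ih => rw [convPow]; infer_instance

lemma charFun_convPow (ν : Measure E) [IsProbabilityMeasure ν] (n : ℕ) (t : E) :
    charFun (ν.convPow n) t = charFun ν t ^ n := by
  induction n with
  | zero => simp [convPow]
  | succ n ih => rw [convPow, charFun_conv, ih, pow_succ]

end ConvPow

end MeasureTheory.Measure

noncomputable def poissonWeight (r : ℝ) (n : ℕ) : ℝ := Real.exp (-r) * r ^ n / n.factorial

lemma poissonWeight_nonneg {r : ℝ} (hr : 0 ≤ r) (n : ℕ) : 0 ≤ poissonWeight r n := by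
  unfold poissonWeight
  positivity

lemma hasSum_poissonWeight_mul_pow (r : ℝ) (w : ℂ) :
    HasSum (fun n ↦ (poissonWeight r n : ℂ) * w ^ n) (cexp (-(r * (1 - w)))) := by
  have h := (NormedSpace.expSeries_div_hasSum_exp ((r : ℂ) * w)).mul_left (cexp (-r))
  rw [← exp_eq_exp_ℂ, ← Complex.exp_add, show -(r : ℂ) + r * w = -(r * (1 - w)) by ring] at h
  convert! h using 2 with n
  simp only [poissonWeight]
  push_cast
  ring

lemma hasSum_poissonWeight (r : ℝ) : HasSum (poissonWeight r) 1 :=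
  Complex.hasSum_ofReal.mp (by simpa using hasSum_poissonWeight_mul_pow r 1)

lemma hasSum_integral_poissonWeight_mul_pow {μ : Measure ℝ} [IsFiniteMeasure μ] {a : ℝ}
    (hμ : ∀ᵐ x ∂μ, 0 ≤ a * x) {w : ℂ} (hw : ‖w‖ ≤ 1) :
    HasSum (fun n ↦ ((∫ x, poissonWeight (a * x) n ∂μ : ℝ) : ℂ) * w ^ n)
      (∫ x, cexp (-(a * (1 - w)) * x) ∂μ) := by
  have hF : ∀ n, ((∫ x, poissonWeight (a * x) n ∂μ : ℝ) : ℂ) * w ^ n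
      = ∫ x, (poissonWeight (a * x) n : ℂ) * w ^ n ∂μ := fun n ↦ by
    rw [integral_mul_const, integral_complex_ofReal]
  simp_rw [hF]
  refine hasSum_integral_of_dominated_convergence (fun n x ↦ poissonWeight (a * x) n)
    (fun n ↦ by unfold poissonWeight; fun_prop) (fun n ↦ ?_)
    (.of_forall fun x ↦ (hasSum_poissonWeight _).summable) ?_ (.of_forall fun x ↦ ?_)
  · filter_upwards [hμ] with x hx
    rw [norm_mul, norm_pow, Complex.norm_real, Real.norm_of_nonneg (poissonWeight_nonneg hx n)]
    exact mul_le_of_le_one_right (poissonWeight_nonneg hx n) (pow_le_one₀ (norm_nonneg w) hw)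
  · simp_rw [(hasSum_poissonWeight _).tsum_eq]
    exact integrable_const 1
  · convert! hasSum_poissonWeight_mul_pow (a * x) w using 2
    push_cast
    ring

lemma isCF_iff_exists_eq_charFun {f : ℝ → ℂ} :
    IsCF f ↔ ∃ μ : Measure ℝ, IsProbabilityMeasure μ ∧ f = charFun μ := by
  have h (μ : Measure ℝ) (t : ℝ) : charFun μ t = ∫ x, cexp (I * (t * x)) ∂μ := by
    simp only [charFun_apply_real, mul_comm I]
  simp only [IsCF, funext_iff, h]

lemma IsCF.norm_le_one {g : ℝ → ℂ} (hg : IsCF g) (t : ℝ) : ‖g t‖ ≤ 1 := by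
  obtain ⟨ν, hν, rfl⟩ := isCF_iff_exists_eq_charFun.mp hg
  exact norm_charFun_le_one t

lemma IsCF.tsum_mul_pow {g : ℝ → ℂ} (hg : IsCF g) {p : ℕ → ℝ} (hp0 : ∀ n, 0 ≤ p n)
    (hp : HasSum p 1) : IsCF (fun t ↦ ∑' n, (p n : ℂ) * g t ^ n) := by
  obtain ⟨ν, hν, rfl⟩ := isCF_iff_exists_eq_charFun.mp hg
  have hp' : ∑' n, ENNReal.ofReal (p n) = 1 := by
    rw [← ENNReal.ofReal_tsum_of_nonneg hp0 hp.summable, hp.tsum_eq, ENNReal.ofReal_one]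
  refine isCF_iff_exists_eq_charFun.mpr ⟨_, Measure.isProbabilityMeasure_sum_smul hp' ν.convPow,
    funext fun t ↦ ?_⟩
  simp [Measure.charFun_sum_smul hp', Measure.charFun_convPow, ENNReal.toReal_ofReal (hp0 _)]

theorem stmt_7 (φ : ℂ → ℂ) (hφ : IsLT φ) (g : ℝ → ℂ) (hg : IsCF g) (a : ℝ) (ha : 0 < a) :
    IsCF (fun t => φ ((a : ℂ) * (1 - g t))) ∧
    PhiID φ (fun t => φ ((a : ℂ) * (1 - g t))) := by
  obtain ⟨μ, hμ, hμneg, hφ⟩ := hφ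
  have hax : ∀ᵐ x ∂μ, 0 ≤ a * x := measure_mono_null
    (fun x hx ↦ lt_of_not_ge fun h ↦ hx (mul_nonneg ha.le h)) hμneg
  set c : ℕ → ℝ := fun n ↦ ∫ x, poissonWeight (a * x) n ∂μ
  have hc : HasSum c 1 := Complex.hasSum_ofReal.mp <| by
    simpa using hasSum_integral_poissonWeight_mul_pow hax (w := 1) (by simp)
  have hc0 : ∀ n, 0 ≤ c n := fun n ↦
    integral_nonneg_of_ae (hax.mono fun x hx ↦ poissonWeight_nonneg hx n)
  refine ⟨?_, fun _ ↦ a, fun _ ↦ ha, fun _ ↦ g, fun _ ↦ hg, fun _ ↦ tendsto_const_nhds⟩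
  convert hg.tsum_mul_pow hc0 hc using 2 with t
  have hre : 0 ≤ ((a : ℂ) * (1 - g t)).re := by
    simpa [Complex.mul_re] using
      mul_nonneg ha.le (sub_nonneg.mpr ((re_le_norm _).trans (hg.norm_le_one t)))
  rw [hφ _ hre, (hasSum_integral_poissonWeight_mul_pow hax (hg.norm_le_one t)).tsum_eq]
end

section
/- Suppose φ is a Laplace transform whose corresponding distribution is self-decomposable (class L), i.e., for every 0 < c < 1 there exists a Laplace transform φ_c with φ(s) = φ(cs)·φ_c(s) for all s > 0. If f(t) = φ(ψ(t)) where ψ(t) = λ|t|^α (a strictly stable exponent with ψ(ct) = c^α ψ(t)), then f is the characteristic function of a self-decomposable (class L) distribution: for every 0 < b < 1 there exists a characteristic function f_b with f(t) = f(bt)·f_b(t). -/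
open MeasureTheory Filter Topology

/-!
If `e^{-ψ}` is a strictly stable characteristic function, `ψ (c t) = c^α ψ t`, and `φ_c` is the
Laplace transform of `X ≥ 0`, then `φ_c (ψ t)` is the characteristic function of `X^{1/α} Y`
with `Y` independent of `X` and distributed according to `e^{-ψ}`. Applied to the factor `φ_c`
in `φ s = φ (c s) φ_c s` with `c = b^α`, this gives `f t = f (b t) · φ_c (ψ t)`.
-/

theorem IsLTR.map_zero {φ : ℝ → ℝ} (hφ : IsLTR φ) : φ 0 = 1 := by
  obtain ⟨μ, hμ, -, hφμ⟩ := hφ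
  simp [hφμ 0 le_rfl]

theorem IsCF.integral_comp_mul {g : ℝ → ℂ} (hg : IsCF g) (ν : Measure ℝ)
    [IsProbabilityMeasure ν] {h : ℝ → ℝ} (hh : Measurable h) :
    IsCF (fun t => ∫ x, g (h x * t) ∂ν) := by
  obtain ⟨μ, hμ, hgμ⟩ := hg
  have hm : Measurable (fun p : ℝ × ℝ => h p.1 * p.2) := by fun_prop
  refine ⟨(ν.prod μ).map (fun p => h p.1 * p.2),
    Measure.isProbabilityMeasure_map hm.aemeasurable, fun t => ?_⟩
  have hint : Integrable (fun p : ℝ × ℝ =>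
      Complex.exp (Complex.I * (t * ((h p.1 * p.2 : ℝ) : ℂ)))) (ν.prod μ) := by
    refine Integrable.mono' (integrable_const 1) (by fun_prop) (Eventually.of_forall fun p => ?_)
    rw [Complex.norm_exp]
    simp [Complex.mul_re]
  rw [integral_map hm.aemeasurable (by fun_prop), integral_prod _ hint]
  refine integral_congr_ae (Eventually.of_forall fun x => ?_)
  simp only [hgμ]
  congr 1 with y
  push_cast
  ring_nf

theorem IsLTR.isCF_comp {φ : ℝ → ℝ} (hφ : IsLTR φ) {ψ : ℝ → ℝ} {α : ℝ} (hα : α ≠ 0)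
    (hψ_nonneg : ∀ t, 0 ≤ ψ t) (hψ_smul : ∀ c t, 0 ≤ c → ψ (c * t) = c ^ α * ψ t)
    (hstable : IsCF (fun t => Complex.exp (-(ψ t : ℂ)))) :
    IsCF (fun t => (φ (ψ t) : ℂ)) := by
  obtain ⟨ν, hν, hν_neg, hφν⟩ := hφ
  have hν_nonneg : ∀ᵐ x ∂ν, 0 ≤ x := by
    simpa [ae_iff, not_le] using hν_neg
  convert hstable.integral_comp_mul ν (h := fun x => x ^ α⁻¹) (by fun_prop) using 2 with t
  rw [hφν _ (hψ_nonneg t), ← integral_complex_ofReal]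
  refine integral_congr_ae (hν_nonneg.mono fun x hx => ?_)
  dsimp only
  rw [hψ_smul _ _ (Real.rpow_nonneg hx _), ← Real.rpow_mul hx, inv_mul_cancel₀ hα,
    Real.rpow_one, Complex.ofReal_exp]
  push_cast
  ring_nf

theorem exists_isCF_factor_of_selfDecomposable {φ : ℝ → ℝ}
    (hsd : ∀ c : ℝ, 0 < c → c < 1 →
      ∃ φc : ℝ → ℝ, IsLTR φc ∧ ∀ s : ℝ, 0 < s → φ s = φ (c * s) * φc s)
    {ψ : ℝ → ℝ} {α : ℝ} (hα : 0 < α)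
    (hψ_nonneg : ∀ t, 0 ≤ ψ t) (hψ_smul : ∀ c t, 0 ≤ c → ψ (c * t) = c ^ α * ψ t)
    (hstable : IsCF (fun t => Complex.exp (-(ψ t : ℂ))))
    {b : ℝ} (hb0 : 0 < b) (hb1 : b < 1) :
    ∃ fb : ℝ → ℂ, IsCF fb ∧ ∀ t, (φ (ψ t) : ℂ) = φ (ψ (b * t)) * fb t := by
  obtain ⟨φc, hφc, hφ_eq⟩ :=
    hsd (b ^ α) (Real.rpow_pos_of_pos hb0 α) (Real.rpow_lt_one hb0.le hb1 hα)
  refine ⟨fun t => φc (ψ t), hφc.isCF_comp hα.ne' hψ_nonneg hψ_smul hstable, fun t => ?_⟩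
  rw [hψ_smul _ _ hb0.le, ← Complex.ofReal_mul, Complex.ofReal_inj]
  rcases (hψ_nonneg t).eq_or_lt with hψt | hψt
  · simp [← hψt, hφc.map_zero]
  · exact hφ_eq _ hψt

theorem stmt_12_general (φ : ℝ → ℝ)
    (hsd : ∀ c : ℝ, 0 < c → c < 1 →
      ∃ φc : ℝ → ℝ, IsLTR φc ∧ ∀ s : ℝ, 0 < s → φ s = φ (c * s) * φc s)
    (lam α : ℝ) (hlam : 0 < lam) (hα : 0 < α)
    (hstable : IsCF (fun t => Complex.exp (-(lam * |t| ^ α : ℝ))))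
    (f : ℝ → ℂ) (hfdef : ∀ t, f t = (φ (lam * |t| ^ α) : ℂ)) :
    ∀ b : ℝ, 0 < b → b < 1 → ∃ fb : ℝ → ℂ, IsCF fb ∧ ∀ t, f t = f (b * t) * fb t := by
  intro b hb0 hb1
  have hψ_smul : ∀ c t : ℝ, 0 ≤ c → lam * |c * t| ^ α = c ^ α * (lam * |t| ^ α) := by
    intro c t hc
    rw [abs_mul, abs_of_nonneg hc, Real.mul_rpow hc (abs_nonneg t)]
    ring
  simp only [hfdef]
  exact exists_isCF_factor_of_selfDecomposable hsd hα (fun t => by positivity) hψ_smul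
    (by simpa only [Complex.ofReal_neg] using hstable) hb0 hb1

theorem stmt_12 (φ : ℝ → ℝ) (hφ : IsLTR φ)
    (hsd : ∀ c : ℝ, 0 < c → c < 1 →
      ∃ φc : ℝ → ℝ, IsLTR φc ∧ ∀ s : ℝ, 0 < s → φ s = φ (c * s) * φc s)
    (lam α : ℝ) (hlam : 0 < lam) (hα : 0 < α) (hα2 : α ≤ 2)
    (hstable : IsCF (fun t => Complex.exp (-(lam * |t| ^ α : ℝ))))
    (f : ℝ → ℂ) (hfdef : ∀ t, f t = (φ (lam * |t| ^ α) : ℂ)) :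
    ∀ b : ℝ, 0 < b → b < 1 → ∃ fb : ℝ → ℂ, IsCF fb ∧ ∀ t, f t = f (b * t) * fb t :=
  stmt_12_general φ hsd lam α hlam hα hstable f hfdef
end

section
/- Let φ be a Laplace transform of a positive random variable U, and for each θ > 0 let N_θ have PGF P_θ(s) = s^j φ((1 - s^m)/θ) (j ≥ 0, m ≥ 1 fixed integers), independent of an i.i.d. array {X_{θ,i}} with characteristic function f_θ. If the characteristic functions satisfy P_θ(f_θ(t)) → φ(-m log g(t)) pointwise as θ → 0 for some characteristic function g, then lim_{θ→0} f_θ(t) = 1 for every t ∈ ℝ. -/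
open MeasureTheory Filter Topology

/-!
Since `U > 0` almost surely, `‖φ z‖ ≤ E[exp (-(re z) U)] → 0` as `re z → ∞`, while the limit
`φ (-m log g(u))` tends to `φ 0 = 1` as `u → 0` and so is nonzero for small `u`. Hence
`re ((1 - f_θ(u)^m) / θ)` stays bounded, which forces `f_θ(u)^m → 1`, and so `‖f_θ(u)‖ → 1`, for
small `u`. For a characteristic function, Cauchy–Schwarz applied to the centred variables
`e^{iaX} - f(a)` and `e^{ibX} - f(b)` gives
`‖f(a + b) - f(a) f(b)‖ ≤ √(1 - ‖f(a)‖²) √(1 - ‖f(b)‖²)`, hence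
`‖f(N u) - f(u)^N‖ ≤ N √(1 - ‖f(u)‖²)`. Writing any `t` as `N u` with `u` small and `N` a
multiple of `m` gives `f_θ(t) → 1`.
-/

open Complex

section ComplexIntegral

variable {α : Type*} [MeasurableSpace α] {ν : Measure α}

lemma norm_integral_mul_le_sqrt_mul_sqrt {U V : α → ℂ} (hU : MemLp U 2 ν) (hV : MemLp V 2 ν) :
    ‖∫ x, U x * V x ∂ν‖ ≤ √(∫ x, ‖U x‖ ^ 2 ∂ν) * √(∫ x, ‖V x‖ ^ 2 ∂ν) := by
  have hsqrt (W : α → ℂ) :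
      (∫ x, ‖W x‖ ^ (2 : ℝ) ∂ν) ^ (1 / (2 : ℝ)) = √(∫ x, ‖W x‖ ^ 2 ∂ν) := by
    simp only [Real.rpow_two, Real.sqrt_eq_rpow, one_div]
  calc ‖∫ x, U x * V x ∂ν‖ ≤ ∫ x, ‖U x‖ * ‖V x‖ ∂ν := by
        simpa only [norm_mul] using norm_integral_le_integral_norm (fun x => U x * V x)
    _ ≤ _ := integral_mul_norm_le_Lp_mul_Lq (f := U) (g := V) Real.HolderConjugate.two_two
        (by simpa using hU) (by simpa using hV)
    _ = _ := by rw [hsqrt, hsqrt]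

lemma integral_sub_integral_mul_sub_integral [IsProbabilityMeasure ν] {h k : α → ℂ}
    (hh : Integrable h ν) (hk : Integrable k ν) (hhk : Integrable (fun x => h x * k x) ν) :
    ∫ x, (h x - ∫ y, h y ∂ν) * (k x - ∫ y, k y ∂ν) ∂ν
      = ∫ x, h x * k x ∂ν - (∫ x, h x ∂ν) * ∫ x, k x ∂ν := by
  set a := ∫ y, h y ∂ν
  set b := ∫ y, k y ∂ν
  have hexpand : ∀ x, (h x - a) * (k x - b) = h x * k x - (b * h x + a * k x) + a * b :=
    fun x => by ring
  have hlin : Integrable (fun x => b * h x + a * k x) ν := (hh.const_mul b).add (hk.const_mul a)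
  have hsub : Integrable (fun x => h x * k x - (b * h x + a * k x)) ν := hhk.sub hlin
  simp_rw [hexpand]
  rw [integral_add hsub (integrable_const _), integral_sub hhk hlin,
    integral_add (hh.const_mul b) (hk.const_mul a), integral_const_mul, integral_const_mul,
    integral_const, probReal_univ, one_smul]
  ring

end ComplexIntegral

section CharFun

variable {ν : Measure ℝ} [IsProbabilityMeasure ν]

lemma norm_cexp_ofReal_mul_ofReal_mul_I (t x : ℝ) : ‖cexp (t * x * I)‖ = 1 := by
  simpa using norm_exp_ofReal_mul_I (t * x)

lemma memLp_cexp_mul_I_sub (p : ENNReal) (t : ℝ) (c : ℂ) :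
    MemLp (fun x : ℝ => cexp (t * x * I) - c) p ν :=
  MemLp.of_bound (by fun_prop) (1 + ‖c‖) (ae_of_all _ fun x =>
    (norm_sub_le _ _).trans (by rw [norm_cexp_ofReal_mul_ofReal_mul_I]))

lemma integrable_cexp_mul_I (t : ℝ) : Integrable (fun x : ℝ => cexp (t * x * I)) ν := by
  simpa using (memLp_cexp_mul_I_sub 1 t 0 (ν := ν)).integrable le_rfl

lemma integral_mul_sub_charFun (a b : ℝ) :
    ∫ x, (cexp (a * x * I) - charFun ν a) * (cexp (b * x * I) - charFun ν b) ∂ν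
      = charFun ν (a + b) - charFun ν a * charFun ν b := by
  have hadd : ∀ x : ℝ, cexp (a * x * I) * cexp (b * x * I) = cexp (↑(a + b) * x * I) :=
    fun x => by rw [← Complex.exp_add]; push_cast; ring_nf
  simp only [charFun_apply_real]
  rw [integral_sub_integral_mul_sub_integral (integrable_cexp_mul_I a) (integrable_cexp_mul_I b)
    (by simpa only [hadd] using integrable_cexp_mul_I (a + b))]
  simp only [hadd]

lemma integral_norm_sq_sub_charFun (a : ℝ) :
    ∫ x, ‖cexp (a * x * I) - charFun ν a‖ ^ 2 ∂ν = 1 - ‖charFun ν a‖ ^ 2 := by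
  have hconj : ∀ x : ℝ, cexp (↑(-a) * x * I) - charFun ν (-a)
      = (starRingEnd ℂ) (cexp (a * x * I) - charFun ν a) := fun x => by
    rw [charFun_neg, map_sub, ← Complex.exp_conj]; simp
  apply Complex.ofReal_injective
  rw [← integral_complex_ofReal]
  calc ∫ x, ((‖cexp (a * x * I) - charFun ν a‖ ^ 2 : ℝ) : ℂ) ∂ν
      = ∫ x, (cexp (a * x * I) - charFun ν a) * (cexp (↑(-a) * x * I) - charFun ν (-a)) ∂ν := by
        simp only [hconj, Complex.mul_conj', Complex.ofReal_pow]
    _ = _ := by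
        rw [integral_mul_sub_charFun, add_neg_cancel, charFun_zero, charFun_neg,
          Complex.mul_conj']
        simp

lemma norm_charFun_add_sub_mul_le (a b : ℝ) :
    ‖charFun ν (a + b) - charFun ν a * charFun ν b‖
      ≤ √(1 - ‖charFun ν a‖ ^ 2) * √(1 - ‖charFun ν b‖ ^ 2) := by
  rw [← integral_mul_sub_charFun, ← integral_norm_sq_sub_charFun a,
    ← integral_norm_sq_sub_charFun b]
  exact norm_integral_mul_le_sqrt_mul_sqrt (memLp_cexp_mul_I_sub 2 a _)
    (memLp_cexp_mul_I_sub 2 b _)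

lemma norm_charFun_natCast_mul_sub_pow_le (u : ℝ) (N : ℕ) :
    ‖charFun ν (N * u) - charFun ν u ^ N‖ ≤ N * √(1 - ‖charFun ν u‖ ^ 2) := by
  induction N with
  | zero => simp
  | succ N ih =>
    set c := √(1 - ‖charFun ν u‖ ^ 2)
    have hstep : ‖charFun ν (N * u + u) - charFun ν (N * u) * charFun ν u‖ ≤ c :=
      (norm_charFun_add_sub_mul_le _ u).trans (mul_le_of_le_one_left (Real.sqrt_nonneg _)
        (Real.sqrt_le_one.2 (by simp)))
    calc ‖charFun ν (↑(N + 1) * u) - charFun ν u ^ (N + 1)‖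
        = ‖(charFun ν (N * u + u) - charFun ν (N * u) * charFun ν u)
            + (charFun ν (N * u) - charFun ν u ^ N) * charFun ν u‖ := by
          push_cast; ring_nf
      _ ≤ c + N * c * 1 := (norm_add_le _ _).trans (add_le_add hstep (by
          rw [norm_mul]; exact mul_le_mul ih (norm_charFun_le_one u) (norm_nonneg _)
            (by positivity)))
      _ = ↑(N + 1) * c := by push_cast; ring

end CharFun

lemma IsCF.exists_eq_charFun {f : ℝ → ℂ} (hf : IsCF f) :
    ∃ ν : Measure ℝ, IsProbabilityMeasure ν ∧ f = charFun ν := by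
  obtain ⟨ν, hν, hfν⟩ := hf
  exact ⟨ν, hν, funext fun t => by rw [hfν, charFun_apply_real]; simp only [mul_comm I]⟩

lemma IsCF.norm_le_one_s17 {f : ℝ → ℂ} (hf : IsCF f) (t : ℝ) : ‖f t‖ ≤ 1 := by
  obtain ⟨ν, _, rfl⟩ := hf.exists_eq_charFun
  exact norm_charFun_le_one t

lemma IsCF.tendsto_nhds_zero {f : ℝ → ℂ} (hf : IsCF f) : Tendsto f (𝓝 0) (𝓝 1) := by
  obtain ⟨ν, _, rfl⟩ := hf.exists_eq_charFun
  simpa using (continuous_charFun (μ := ν)).tendsto 0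

lemma Complex.sq_norm_sub_one_le {z : ℂ} (hz : ‖z‖ ≤ 1) : ‖z - 1‖ ^ 2 ≤ 2 * (1 - z.re) := by
  have h := (sq_le_one_iff₀ (norm_nonneg z)).2 hz
  rw [Complex.sq_norm, Complex.normSq_apply] at h ⊢
  simp only [Complex.sub_re, Complex.one_re, Complex.sub_im, Complex.one_im, sub_zero]
  nlinarith

section Families

variable {ι : Type*} {l : Filter ι}

lemma tendsto_one_of_tendsto_one_sub_re {w : ι → ℂ} (hw : ∀ᶠ i in l, ‖w i‖ ≤ 1)
    (h : Tendsto (fun i => 1 - (w i).re) l (𝓝 0)) : Tendsto w l (𝓝 1) := by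
  rw [tendsto_iff_norm_sub_tendsto_zero]
  refine squeeze_zero' (Eventually.of_forall fun i => norm_nonneg _)
    (hw.mono fun i hi => Real.le_sqrt_of_sq_le (Complex.sq_norm_sub_one_le hi)) ?_
  simpa using (h.const_mul 2).sqrt

lemma tendsto_norm_of_tendsto_pow {w : ι → ℂ} {m : ℕ} (hm : m ≠ 0)
    (hw : ∀ᶠ i in l, ‖w i‖ ≤ 1) (h : Tendsto (fun i => w i ^ m) l (𝓝 1)) :
    Tendsto (fun i => ‖w i‖) l (𝓝 1) := by
  refine tendsto_of_tendsto_of_tendsto_of_le_of_le' (g := fun i => ‖w i‖ ^ m)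
    (by simpa using h.norm) tendsto_const_nhds ?_ hw
  filter_upwards [hw] with i hi
  exact pow_le_of_le_one (norm_nonneg _) hi hm

lemma tendsto_natCast_mul_sub_pow {f : ι → ℝ → ℂ} (hf : ∀ᶠ i in l, IsCF (f i)) {u : ℝ}
    (hu : Tendsto (fun i => ‖f i u‖) l (𝓝 1)) (N : ℕ) :
    Tendsto (fun i => f i (N * u) - f i u ^ N) l (𝓝 0) := by
  have hbound : Tendsto (fun i => N * √(1 - ‖f i u‖ ^ 2)) l (𝓝 0) := by
    have hcont : Continuous fun r : ℝ => (N : ℝ) * √(1 - r ^ 2) := by fun_prop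
    simpa [Function.comp_def] using (hcont.tendsto 1).comp hu
  refine squeeze_zero_norm' ?_ hbound
  filter_upwards [hf] with i hi
  obtain ⟨ν, _, hν⟩ := hi.exists_eq_charFun
  rw [hν]
  exact norm_charFun_natCast_mul_sub_pow_le u N

lemma tendsto_one_of_tendsto_pow_of_abs_lt {f : ι → ℝ → ℂ} (hf : ∀ᶠ i in l, IsCF (f i))
    {m : ℕ} (hm : m ≠ 0) {δ : ℝ} (hδ : 0 < δ)
    (h : ∀ u, |u| < δ → Tendsto (fun i => f i u ^ m) l (𝓝 1)) (t : ℝ) :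
    Tendsto (fun i => f i t) l (𝓝 1) := by
  obtain ⟨K, hK⟩ := exists_nat_gt (|t| / δ)
  have hKpos : (0 : ℝ) < K := lt_of_le_of_lt (by positivity) hK
  have hmK : (K : ℝ) ≤ ↑(m * K) := by
    push_cast
    exact le_mul_of_one_le_left hKpos.le (by exact_mod_cast Nat.one_le_iff_ne_zero.2 hm)
  have hN : (0 : ℝ) < ↑(m * K) := hKpos.trans_le hmK
  set u := t / ↑(m * K)
  have hu : |u| < δ := by
    rw [abs_div, abs_of_pos hN, div_lt_iff₀ hN]
    rw [div_lt_iff₀ hδ] at hK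
    nlinarith
  have hpow := h u hu
  have hnorm := tendsto_norm_of_tendsto_pow hm (hf.mono fun i hi => hi.norm_le_one_s17 u) hpow
  have hsum := (tendsto_natCast_mul_sub_pow hf hnorm (m * K)).add (hpow.pow K)
  rw [zero_add, one_pow] at hsum
  refine hsum.congr fun i => ?_
  rw [pow_mul, mul_div_cancel₀ t hN.ne', sub_add_cancel]

end Families

section Laplace

variable {μ : Measure ℝ}

lemma norm_integral_cexp_neg_mul_le (z : ℂ) :
    ‖∫ x, cexp (-z * x) ∂μ‖ ≤ ∫ x, Real.exp (-z.re * x) ∂μ :=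
  (norm_integral_le_integral_norm _).trans_eq (by simp [Complex.norm_exp])

lemma tendsto_integral_exp_neg_mul_atTop [IsFiniteMeasure μ] (hμ : ∀ᵐ x ∂μ, 0 < x) :
    Tendsto (fun s => ∫ x, Real.exp (-s * x) ∂μ) atTop (𝓝 0) := by
  have h := tendsto_integral_filter_of_dominated_convergence (μ := μ) (fun _ => (1 : ℝ))
    (Eventually.of_forall fun s =>
      (by fun_prop : Continuous fun x => Real.exp (-s * x)).aestronglyMeasurable)
    (by
      filter_upwards [eventually_ge_atTop 0] with s hs
      filter_upwards [hμ] with x hx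
      rw [Real.norm_eq_abs, Real.abs_exp, Real.exp_le_one_iff]
      nlinarith)
    (integrable_const 1)
    (by
      filter_upwards [hμ] with x hx
      have hlin : Tendsto (fun s : ℝ => -s * x) atTop atBot := by
        simpa only [neg_mul, Function.comp_def, id] using
          tendsto_neg_atTop_atBot.comp (tendsto_id.atTop_mul_const hx)
      exact Real.tendsto_exp_atBot.comp hlin)
  simpa using h

lemma tendsto_integral_cexp_neg_mul_nhdsWithin_zero [IsProbabilityMeasure μ]
    (hμ : ∀ᵐ x ∂μ, 0 ≤ x) :
    Tendsto (fun z => ∫ x, cexp (-z * x) ∂μ) (𝓝[{z | 0 ≤ z.re}] 0) (𝓝 1) := by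
  have h := tendsto_integral_filter_of_dominated_convergence (μ := μ)
    (l := 𝓝[{z : ℂ | 0 ≤ z.re}] 0) (fun _ => (1 : ℝ))
    (Eventually.of_forall fun z =>
      (by fun_prop : Continuous fun x : ℝ => cexp (-z * x)).aestronglyMeasurable)
    (by
      filter_upwards [self_mem_nhdsWithin] with z hz
      filter_upwards [hμ] with x hx
      rw [Complex.norm_exp, Real.exp_le_one_iff]
      simpa using mul_nonneg (show 0 ≤ z.re from hz) hx)
    (integrable_const 1)
    (ae_of_all _ fun x => tendsto_nhdsWithin_of_tendsto_nhds (by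
      simpa using (by fun_prop : Continuous fun z : ℂ => cexp (-z * x)).tendsto 0))
  simpa using h

variable {φ : ℂ → ℂ}

lemma exists_eventually_re_le_of_le_norm [IsFiniteMeasure μ]
    (hφ : ∀ z : ℂ, 0 ≤ z.re → φ z = ∫ x, cexp (-z * x) ∂μ) (hμ : ∀ᵐ x ∂μ, 0 < x)
    {ι : Type*} {l : Filter ι} {z : ι → ℂ} (hz : ∀ᶠ i in l, 0 ≤ (z i).re) {c : ℝ} (hc : 0 < c)
    (h : ∀ᶠ i in l, c ≤ ‖φ (z i)‖) : ∃ S, ∀ᶠ i in l, (z i).re ≤ S := by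
  obtain ⟨S, hS⟩ := eventually_atTop.1
    ((tendsto_integral_exp_neg_mul_atTop hμ).eventually (gt_mem_nhds hc))
  refine ⟨S, ?_⟩
  filter_upwards [hz, h] with i hzi hi
  by_contra! hlt
  have := (hφ _ hzi ▸ hi).trans (norm_integral_cexp_neg_mul_le _)
  linarith [hS _ hlt.le]

lemma tendsto_one_of_le_norm_div [IsFiniteMeasure μ]
    (hφ : ∀ z : ℂ, 0 ≤ z.re → φ z = ∫ x, cexp (-z * x) ∂μ) (hμ : ∀ᵐ x ∂μ, 0 < x) {w : ℝ → ℂ}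
    (hw : ∀ᶠ θ in 𝓝[>] 0, ‖w θ‖ ≤ 1) {c : ℝ} (hc : 0 < c)
    (h : ∀ᶠ θ in 𝓝[>] 0, c ≤ ‖φ ((1 - w θ) / θ)‖) : Tendsto w (𝓝[>] 0) (𝓝 1) := by
  have hre (θ : ℝ) : ((1 - w θ) / θ).re = (1 - (w θ).re) / θ := by
    simp [Complex.div_ofReal_re]
  have hpos : ∀ᶠ θ in 𝓝[>] (0 : ℝ), 0 < θ := self_mem_nhdsWithin
  have hgap : ∀ᶠ θ in 𝓝[>] (0 : ℝ), 0 ≤ 1 - (w θ).re := hw.mono fun θ hθ =>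
    sub_nonneg.2 ((Complex.re_le_norm _).trans hθ)
  obtain ⟨S, hS⟩ := exists_eventually_re_le_of_le_norm hφ hμ
    (by filter_upwards [hpos, hgap] with θ hθ hg; rw [hre]; positivity) hc h
  have hgap_le : ∀ᶠ θ in 𝓝[>] (0 : ℝ), 1 - (w θ).re ≤ S * θ := by
    filter_upwards [hpos, hS] with θ hθ hSθ
    rwa [hre, div_le_iff₀ hθ] at hSθ
  have hSθ : Tendsto (fun θ : ℝ => S * θ) (𝓝[>] 0) (𝓝 0) := by
    simpa using tendsto_nhdsWithin_of_tendsto_nhds ((continuous_const_mul S).tendsto (0 : ℝ))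
  exact tendsto_one_of_tendsto_one_sub_re hw (squeeze_zero' hgap hgap_le hSθ)

lemma tendsto_comp_neg_mul_log_of_isCF [IsProbabilityMeasure μ]
    (hφ : ∀ z : ℂ, 0 ≤ z.re → φ z = ∫ x, cexp (-z * x) ∂μ) (hμ : ∀ᵐ x ∂μ, 0 ≤ x) {g : ℝ → ℂ}
    (hg : IsCF g) (m : ℕ) : Tendsto (fun t => φ (-(m : ℂ) * Complex.log (g t))) (𝓝 0) (𝓝 1) := by
  have hre (t : ℝ) : 0 ≤ (-(m : ℂ) * Complex.log (g t)).re := by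
    have := Real.log_nonpos (norm_nonneg _) (hg.norm_le_one_s17 t)
    rw [← Complex.ofReal_natCast, neg_mul, Complex.neg_re, Complex.re_ofReal_mul, Complex.log_re]
    nlinarith [(Nat.cast_nonneg m : (0 : ℝ) ≤ m)]
  have hlog : Tendsto (fun t => -(m : ℂ) * Complex.log (g t)) (𝓝 0) (𝓝 0) := by
    simpa using ((continuousAt_clog Complex.one_mem_slitPlane).tendsto.comp
      hg.tendsto_nhds_zero).const_mul (-(m : ℂ))
  refine ((tendsto_integral_cexp_neg_mul_nhdsWithin_zero hμ).comp
    (tendsto_nhdsWithin_iff.2 ⟨hlog, Eventually.of_forall hre⟩)).congr fun t => ?_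
  exact (hφ _ (hre t)).symm

end Laplace

theorem stmt_17 (φ : ℂ → ℂ) (μ : Measure ℝ) (hprob : IsProbabilityMeasure μ)
    (hpos : μ {x | x ≤ 0} = 0)
    (hLT : ∀ z : ℂ, 0 ≤ z.re → φ z = ∫ x, Complex.exp (-z * x) ∂μ)
    (j m : ℕ) (hm : 1 ≤ m)
    (f : ℝ → ℝ → ℂ) (hf : ∀ θ : ℝ, 0 < θ → IsCF (f θ))
    (g : ℝ → ℂ) (hg : IsCF g)
    (hconv : ∀ t, Tendsto (fun θ : ℝ => (f θ t) ^ j * φ ((1 - (f θ t) ^ m) / (θ : ℂ)))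
        (𝓝[>] 0) (𝓝 (φ (-(m : ℂ) * Complex.log (g t))))) :
    ∀ t, Tendsto (fun θ : ℝ => f θ t) (𝓝[>] 0) (𝓝 1) := by
  have hμ : ∀ᵐ x ∂μ, 0 < x := by simpa [ae_iff] using hpos
  have hlimit_one := tendsto_comp_neg_mul_log_of_isCF hLT (hμ.mono fun x hx => hx.le) hg m
  obtain ⟨δ, hδ, hlimit⟩ := Metric.eventually_nhds_iff.1 (hlimit_one.eventually_ne one_ne_zero)
  have hcf : ∀ᶠ θ in 𝓝[>] (0 : ℝ), IsCF (f θ) := eventually_nhdsWithin_of_forall hf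
  refine tendsto_one_of_tendsto_pow_of_abs_lt hcf (Nat.one_le_iff_ne_zero.1 hm) hδ fun u hu => ?_
  have hpow : ∀ᶠ θ in 𝓝[>] (0 : ℝ), ‖f θ u ^ j‖ ≤ 1 ∧ ‖f θ u ^ m‖ ≤ 1 := hcf.mono fun θ hθ => by
    simp only [norm_pow]
    exact ⟨pow_le_one₀ (norm_nonneg _) (hθ.norm_le_one_s17 u),
      pow_le_one₀ (norm_nonneg _) (hθ.norm_le_one_s17 u)⟩
  have hL : 0 < ‖φ (-(m : ℂ) * Complex.log (g u))‖ :=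
    norm_pos_iff.2 (hlimit (by simpa using hu))
  refine tendsto_one_of_le_norm_div hLT hμ (hpow.mono fun θ h => h.2) (half_pos hL) ?_
  filter_upwards [(hconv u).norm.eventually (lt_mem_nhds (half_lt_self hL)), hpow]
    with θ hθ hfθ
  rw [norm_mul] at hθ
  exact hθ.le.trans (mul_le_of_le_one_left (norm_nonneg _) hfθ.1)
end
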